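/- arXiv:1704.04268 — 6 statements merged into one kernel-verified Lean document; each statement's English description precedes it below -/
import Mathlib

section
/- For all real numbers X, Y, Z with 0 < X < 1, 0 < Y < 1, 0 < Z < 1, if 18 + X*Y^3*Z^6 + 2*X*Y^3 - 3*X*Y - 18*Y < 0, then 18 + X*Y^3*Z^6 + 2*X*Y^3 + 9*X*Y - 12*X - 18*Y < 0. -/
theorem stmt0 : ∀ X Y Z : ℝ, 0 < X → X < 1 → 0 < Y → Y < 1 → 0 < Z → Z < 1 →
    18 + X*Y^3*Z^6 + 2*X*Y^3 - 3*X*Y - 18*Y < 0 →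
    18 + X*Y^3*Z^6 + 2*X*Y^3 + 9*X*Y - 12*X - 18*Y < 0 := by
  intro X Y Z hX _ _ hY1 _ _ hGreedy
  have hGap : 0 < X * (1 - Y) := mul_pos hX (sub_pos.mpr hY1)
  linear_combination hGreedy + 12 * hGap
end

section
/- For all real numbers X, Y, Z with 0 < X < 1, 0 < Y < 1, 0 < Z < 1, the following hold: (a) 1 - (1/6)*X*Y^3 - (1/6)*X*Y - (2/3)*X > 0; (b) 1 - (1/18)*X*Y^3*Z^6 - (1/9)*X*Y^3 - (1/6)*X*Y - (2/3)*X > 0; (c) 1 + (1/6)*X*Y*(1 - Y^2) - (2/3)*X - (1/3)*Y > 0; (d) 1 + (1/18)*X*Y*(3 - Y^2*Z^6 - 2*Y^2) - (2/3)*X - (1/3)*Y > 0. -/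
/-! In (a) and (b) the coefficients of `X` add up to `1`, so the subtracted quantity is `X` times
a convex combination of monomials in `Y, Z` with values in `[0, 1]`, hence less than `1`.
In (c) and (d) the term carrying `X * Y` is nonnegative, and `1 - 2/3 X - 1/3 Y > 0` because the
weights `2/3` and `1/3` add up to `1`. -/

theorem stmt5 : ∀ X Y Z : ℝ, 0 < X → X < 1 → 0 < Y → Y < 1 → 0 < Z → Z < 1 →
    1 - (1/6)*X*Y^3 - (1/6)*X*Y - (2/3)*X > 0 ∧
    1 - (1/18)*X*Y^3*Z^6 - (1/9)*X*Y^3 - (1/6)*X*Y - (2/3)*X > 0 ∧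
    1 + (1/6)*X*Y*(1 - Y^2) - (2/3)*X - (1/3)*Y > 0 ∧
    1 + (1/18)*X*Y*(3 - Y^2*Z^6 - 2*Y^2) - (2/3)*X - (1/3)*Y > 0 := by
  intro X Y Z hX hX1 hY hY1 hZ hZ1
  have hY2 : Y ^ 2 ≤ 1 := pow_le_one₀ hY.le hY1.le
  have hY3 : Y ^ 3 ≤ 1 := pow_le_one₀ hY.le hY1.le
  have hZ6 : Z ^ 6 ≤ 1 := pow_le_one₀ hZ.le hZ1.le
  have hY3Z6 : Y ^ 3 * Z ^ 6 ≤ 1 := mul_le_one₀ hY3 (by positivity) hZ6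
  have hXY : 0 ≤ X * Y := by positivity
  refine ⟨?_, ?_, ?_, ?_⟩
  · have := mul_lt_one_of_nonneg_of_lt_one_left hX.le hX1
      (show (1/6) * Y ^ 3 + (1/6) * Y + 2/3 ≤ 1 by linarith)
    linarith
  · have := mul_lt_one_of_nonneg_of_lt_one_left hX.le hX1
      (show (1/18) * (Y ^ 3 * Z ^ 6) + (1/9) * Y ^ 3 + (1/6) * Y + 2/3 ≤ 1 by linarith)
    linarith
  · have := mul_nonneg hXY (show 0 ≤ 1 - Y ^ 2 by linarith)
    linarith
  · have hY2Z6 : Y ^ 2 * Z ^ 6 ≤ 1 := mul_le_one₀ hY2 (by positivity) hZ6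
    have := mul_nonneg hXY (show 0 ≤ 3 - Y ^ 2 * Z ^ 6 - 2 * Y ^ 2 by linarith)
    linarith
end

section
/- Define functions p_xy, p_xx : ℕ × ℕ → ℚ by: p_xy(3, ℓ) = 1/3 and p_xx(3, ℓ) = 1/3 for ℓ = 0, 1, 2; p_xy(k, 0) = (1/C(k+1,2)) + (C(k-1,2)/C(k+1,2)) * p_xy(k-1, 0) and p_xx(k, 0) = p_xy(k, 0) for k ≥ 4; p_xx(k, ℓ) = (1/C(k,2)) + (C(k-2,2)/C(k,2)) * p_xx(k-1, ℓ-1) for k ≥ 4, k > ℓ ≥ 1; p_xy(k, ℓ) = (C(k-1,2)/C(k,2)) * p_xy(k-1, ℓ-1) for k ≥ 4, k > ℓ ≥ 1, where C(n,2) = n*(n-1)/2. Then for all k ≥ 4 and 0 ≤ ℓ < k, p_xy(k, ℓ) < 1/k. -/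
/-- `C2 n = C(n,2) = n(n-1)/2` as a rational number. -/
def C2 (n : ℕ) : ℚ := (n : ℚ) * ((n : ℚ) - 1) / 2

/-!
The value `1 / k` is a strict supersolution of both recursions for `p_xy`: feeding
`p_xy (k-1) ℓ = 1 / (k-1)` into them gives `1 / (k+1)` when `ℓ = 0` and `(k-2) / (k (k-1))`
when `ℓ ≥ 1`, both below `1 / k`. Since the coefficients are nonnegative, induction on `k`
from `p_xy 3 ℓ = 1/3` gives the bound.
-/

lemma C2_nonneg (n : ℕ) : 0 ≤ C2 n := by
  unfold C2
  rcases n with _ | n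
  · simp
  · push_cast
    have : (0 : ℚ) ≤ n := n.cast_nonneg
    nlinarith

lemma C2_div_C2_succ {m : ℕ} (hm : m ≠ 0) : C2 m / C2 (m + 1) = ((m : ℚ) - 1) / (m + 1) := by
  have : (m : ℚ) ≠ 0 := by exact_mod_cast hm
  simp only [C2, Nat.cast_add, Nat.cast_one, add_sub_cancel_right]
  field_simp

lemma one_div_C2_add_two_add {m : ℕ} (hm : m ≠ 0) :
    1 / C2 (m + 2) + C2 m / C2 (m + 2) * (1 / m) = 1 / ((m : ℚ) + 2) := by
  have : (m : ℚ) ≠ 0 := by exact_mod_cast hm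
  simp only [C2, Nat.cast_add, Nat.cast_ofNat, show (m : ℚ) + 2 - 1 = m + 1 by ring]
  field_simp
  ring

lemma one_div_C2_add_two_add_lt {m : ℕ} (hm : m ≠ 0) {x : ℚ} (hx : x ≤ 1 / m) :
    1 / C2 (m + 2) + C2 m / C2 (m + 2) * x < 1 / ((m : ℚ) + 1) := by
  have hcoef : 0 ≤ C2 m / C2 (m + 2) := div_nonneg (C2_nonneg m) (C2_nonneg (m + 2))
  calc 1 / C2 (m + 2) + C2 m / C2 (m + 2) * x
      ≤ 1 / C2 (m + 2) + C2 m / C2 (m + 2) * (1 / m) := by gcongr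
    _ = 1 / ((m : ℚ) + 2) := one_div_C2_add_two_add hm
    _ < 1 / ((m : ℚ) + 1) := by gcongr; linarith

lemma C2_div_C2_succ_mul_lt {m : ℕ} (hm : m ≠ 0) {x : ℚ} (hx : x ≤ 1 / m) :
    C2 m / C2 (m + 1) * x < 1 / ((m : ℚ) + 1) := by
  have hmpos : (0 : ℚ) < m := by exact_mod_cast Nat.pos_of_ne_zero hm
  have hcoef : 0 ≤ C2 m / C2 (m + 1) := div_nonneg (C2_nonneg m) (C2_nonneg (m + 1))
  calc C2 m / C2 (m + 1) * x
      ≤ C2 m / C2 (m + 1) * (1 / m) := by gcongr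
    _ = ((m : ℚ) - 1) / (m + 1) * (1 / m) := by rw [C2_div_C2_succ hm]
    _ < 1 / ((m : ℚ) + 1) := by
      rw [div_mul_div_comm, div_lt_div_iff₀ (by positivity) (by positivity)]
      nlinarith

theorem stmt8_general (p_xy p_xx : ℕ → ℕ → ℚ)
    (h3 : ∀ ℓ, ℓ ≤ 2 → p_xy 3 ℓ = 1/3 ∧ p_xx 3 ℓ = 1/3)
    (h0 : ∀ k, 4 ≤ k →
      p_xy k 0 = 1 / C2 (k+1) + (C2 (k-1) / C2 (k+1)) * p_xy (k-1) 0 ∧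
      p_xx k 0 = p_xy k 0)
    (hxy : ∀ k ℓ, 4 ≤ k → 1 ≤ ℓ → ℓ < k →
      p_xy k ℓ = (C2 (k-1) / C2 k) * p_xy (k-1) (ℓ-1)) :
    ∀ k ℓ, 4 ≤ k → ℓ < k → p_xy k ℓ < 1 / (k : ℚ) := by
  have step : ∀ m, 3 ≤ m → (∀ ℓ < m, p_xy m ℓ ≤ 1 / m) →
      ∀ ℓ < m + 1, p_xy (m + 1) ℓ < 1 / ((m + 1 : ℕ) : ℚ) := by
    intro m hm ih ℓ hℓ
    push_cast
    cases ℓ with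
    | zero =>
      rw [(h0 (m + 1) (by omega)).1, Nat.add_sub_cancel]
      exact one_div_C2_add_two_add_lt (by omega) (ih 0 (by omega))
    | succ n =>
      rw [hxy (m + 1) (n + 1) (by omega) (by omega) hℓ, Nat.add_sub_cancel, Nat.add_sub_cancel]
      exact C2_div_C2_succ_mul_lt (by omega) (ih n (by omega))
  have le_inv : ∀ k, 3 ≤ k → ∀ ℓ < k, p_xy k ℓ ≤ 1 / k := by
    intro k hk
    induction k, hk using Nat.le_induction with
    | base => intro ℓ hℓ; rw [(h3 ℓ (by omega)).1]; norm_num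
    | succ m hm ih => exact fun ℓ hℓ => (step m hm ih ℓ hℓ).le
  intro k ℓ hk hℓ
  obtain ⟨m, rfl⟩ : ∃ m, k = m + 1 := ⟨k - 1, by omega⟩
  exact step m (by omega) (le_inv m (by omega)) ℓ hℓ

theorem stmt8 (p_xy p_xx : ℕ → ℕ → ℚ)
    (h3 : ∀ ℓ, ℓ ≤ 2 → p_xy 3 ℓ = 1/3 ∧ p_xx 3 ℓ = 1/3)
    (h0 : ∀ k, 4 ≤ k →
      p_xy k 0 = 1 / C2 (k+1) + (C2 (k-1) / C2 (k+1)) * p_xy (k-1) 0 ∧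
      p_xx k 0 = p_xy k 0)
    (hxx : ∀ k ℓ, 4 ≤ k → 1 ≤ ℓ → ℓ < k →
      p_xx k ℓ = 1 / C2 k + (C2 (k-2) / C2 k) * p_xx (k-1) (ℓ-1))
    (hxy : ∀ k ℓ, 4 ≤ k → 1 ≤ ℓ → ℓ < k →
      p_xy k ℓ = (C2 (k-1) / C2 k) * p_xy (k-1) (ℓ-1)) :
    ∀ k ℓ, 4 ≤ k → ℓ < k → p_xy k ℓ < 1 / (k : ℚ) :=
  stmt8_general p_xy p_xx h3 h0 hxy
end

section
/- With p_xy and p_xx defined by the recursions p_xy(3,ℓ) = p_xx(3,ℓ) = 1/3 for ℓ = 0,1,2; p_xx(k,0) = p_xy(k,0) with p_xy(k,0) = 1/C(k+1,2) + (C(k-1,2)/C(k+1,2))*p_xy(k-1,0) for k ≥ 4; p_xx(k,ℓ) = 1/C(k,2) + (C(k-2,2)/C(k,2))*p_xx(k-1,ℓ-1) and p_xy(k,ℓ) = (C(k-1,2)/C(k,2))*p_xy(k-1,ℓ-1) for k ≥ 4, k > ℓ ≥ 1: one has p_xx(k,ℓ) - p_xy(k,ℓ) = 0 for (k = 3, ℓ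 = 0,1,2) and (k ≥ 4, ℓ = 0), and p_xx(k,ℓ) - p_xy(k,ℓ) > 0 for all k ≥ 4 and 1 ≤ ℓ < k. -/
lemma C2_succ (n : ℕ) : C2 (n + 1) = C2 n + n := by
  unfold C2; push_cast; ring

lemma C2_pos {n : ℕ} (hn : 2 ≤ n) : 0 < C2 n := by
  have : (2 : ℚ) ≤ n := by exact_mod_cast hn
  unfold C2; nlinarith

lemma lt_one_of_xy_step {m : ℕ} {b : ℚ} (hb : m * b < 1) :
    (m + 1 : ℚ) * (C2 (m + 1) / C2 (m + 2) * b) < 1 := by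
  have hC : C2 (m + 1) / C2 (m + 2) * b = m * b / (m + 2) := by
    rw [div_mul_eq_mul_div, div_eq_div_iff (C2_pos (by omega)).ne' (by positivity)]
    unfold C2; push_cast; ring
  rw [hC, mul_div_assoc', div_lt_one (by positivity)]
  nlinarith

lemma lt_one_of_xy_step_zero {m : ℕ} {b : ℚ} (hb : m * b < 1) :
    (m + 1 : ℚ) * (1 / C2 (m + 3) + C2 (m + 1) / C2 (m + 3) * b) < 1 := by
  have hC : 1 / C2 (m + 3) + C2 (m + 1) / C2 (m + 3) * b
      = (2 + (m + 1) * (m * b)) / ((m + 3) * (m + 2)) := by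
    rw [div_mul_eq_mul_div, ← add_div,
      div_eq_div_iff (C2_pos (by omega)).ne' (by positivity)]
    unfold C2; push_cast; ring
  rw [hC, mul_div_assoc', div_lt_one (by positivity)]
  nlinarith [mul_pos (by positivity : (0 : ℚ) < (m + 1) ^ 2) (sub_pos.2 hb)]

lemma xx_step_sub_xy_step_pos (m : ℕ) {a b : ℚ} (hab : b ≤ a) (hb : m * b < 1) :
    0 < 1 / C2 (m + 2) + C2 m / C2 (m + 2) * a - C2 (m + 1) / C2 (m + 2) * b := by
  have hC := C2_pos (n := m + 2) (by omega)
  have hid : 1 / C2 (m + 2) + C2 m / C2 (m + 2) * a - C2 (m + 1) / C2 (m + 2) * b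
      = (C2 m * (a - b) + (1 - m * b)) / C2 (m + 2) := by
    rw [C2_succ m]; ring
  rw [hid]
  have := mul_nonneg (C2_nonneg m) (sub_nonneg.2 hab)
  apply div_pos _ hC
  linarith

section Recursions

variable {p_xy p_xx : ℕ → ℕ → ℚ}

lemma mul_p_xy_lt_one
    (h3 : ∀ ℓ, ℓ ≤ 2 → p_xy 3 ℓ = 1 / 3)
    (h0 : ∀ k, 4 ≤ k → p_xy k 0 = 1 / C2 (k + 1) + (C2 (k - 1) / C2 (k + 1)) * p_xy (k - 1) 0)
    (hxy : ∀ k ℓ, 4 ≤ k → 1 ≤ ℓ → ℓ < k → p_xy k ℓ = (C2 (k - 1) / C2 k) * p_xy (k - 1) (ℓ - 1))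
    {m : ℕ} (hm : 2 ≤ m) : ∀ ℓ ≤ m, (m : ℚ) * p_xy (m + 1) ℓ < 1 := by
  induction m, hm using Nat.le_induction with
  | base =>
    intro ℓ hℓ
    rw [h3 ℓ hℓ]
    norm_num
  | succ n hn ih =>
    intro ℓ hℓ
    push_cast
    rcases Nat.eq_zero_or_pos ℓ with rfl | hℓ
    · rw [h0 (n + 2) (by omega)]
      exact lt_one_of_xy_step_zero (ih 0 (by omega))
    · rw [hxy (n + 2) ℓ (by omega) hℓ (by omega)]
      exact lt_one_of_xy_step (ih (ℓ - 1) (by omega))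

lemma p_xy_lt_p_xx_of_le
    (hxx : ∀ k ℓ, 4 ≤ k → 1 ≤ ℓ → ℓ < k →
      p_xx k ℓ = 1 / C2 k + (C2 (k - 2) / C2 k) * p_xx (k - 1) (ℓ - 1))
    (hxy : ∀ k ℓ, 4 ≤ k → 1 ≤ ℓ → ℓ < k → p_xy k ℓ = (C2 (k - 1) / C2 k) * p_xy (k - 1) (ℓ - 1))
    {m ℓ : ℕ} (hm : 2 ≤ m) (hℓ₀ : 1 ≤ ℓ) (hℓ : ℓ < m + 2)
    (hle : p_xy (m + 1) (ℓ - 1) ≤ p_xx (m + 1) (ℓ - 1))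
    (hlt : (m : ℚ) * p_xy (m + 1) (ℓ - 1) < 1) :
    p_xy (m + 2) ℓ < p_xx (m + 2) ℓ := by
  rw [← sub_pos, hxx (m + 2) ℓ (by omega) hℓ₀ hℓ, hxy (m + 2) ℓ (by omega) hℓ₀ hℓ]
  exact xx_step_sub_xy_step_pos m hle hlt

lemma p_xy_le_p_xx
    (h3 : ∀ ℓ, ℓ ≤ 2 → p_xy 3 ℓ = 1 / 3 ∧ p_xx 3 ℓ = 1 / 3)
    (h0 : ∀ k, 4 ≤ k →
      p_xy k 0 = 1 / C2 (k + 1) + (C2 (k - 1) / C2 (k + 1)) * p_xy (k - 1) 0 ∧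
      p_xx k 0 = p_xy k 0)
    (hxx : ∀ k ℓ, 4 ≤ k → 1 ≤ ℓ → ℓ < k →
      p_xx k ℓ = 1 / C2 k + (C2 (k - 2) / C2 k) * p_xx (k - 1) (ℓ - 1))
    (hxy : ∀ k ℓ, 4 ≤ k → 1 ≤ ℓ → ℓ < k → p_xy k ℓ = (C2 (k - 1) / C2 k) * p_xy (k - 1) (ℓ - 1))
    {m : ℕ} (hm : 2 ≤ m) : ∀ ℓ ≤ m, p_xy (m + 1) ℓ ≤ p_xx (m + 1) ℓ := by
  induction m, hm using Nat.le_induction with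
  | base =>
    intro ℓ hℓ
    rw [(h3 ℓ hℓ).1, (h3 ℓ hℓ).2]
  | succ n hn ih =>
    intro ℓ hℓ
    rcases Nat.eq_zero_or_pos ℓ with rfl | hℓ₀
    · exact (h0 (n + 2) (by omega)).2.ge
    · refine (p_xy_lt_p_xx_of_le hxx hxy hn hℓ₀ (by omega) (ih (ℓ - 1) (by omega)) ?_).le
      exact mul_p_xy_lt_one (fun ℓ hℓ ↦ (h3 ℓ hℓ).1) (fun k hk ↦ (h0 k hk).1) hxy hn _
        (by omega)

end Recursions

theorem stmt9 (p_xy p_xx : ℕ → ℕ → ℚ)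
    (h3 : ∀ ℓ, ℓ ≤ 2 → p_xy 3 ℓ = 1/3 ∧ p_xx 3 ℓ = 1/3)
    (h0 : ∀ k, 4 ≤ k →
      p_xy k 0 = 1 / C2 (k+1) + (C2 (k-1) / C2 (k+1)) * p_xy (k-1) 0 ∧
      p_xx k 0 = p_xy k 0)
    (hxx : ∀ k ℓ, 4 ≤ k → 1 ≤ ℓ → ℓ < k →
      p_xx k ℓ = 1 / C2 k + (C2 (k-2) / C2 k) * p_xx (k-1) (ℓ-1))
    (hxy : ∀ k ℓ, 4 ≤ k → 1 ≤ ℓ → ℓ < k →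
      p_xy k ℓ = (C2 (k-1) / C2 k) * p_xy (k-1) (ℓ-1)) :
    (∀ ℓ, ℓ ≤ 2 → p_xx 3 ℓ - p_xy 3 ℓ = 0) ∧
    (∀ k, 4 ≤ k → p_xx k 0 - p_xy k 0 = 0) ∧
    (∀ k ℓ, 4 ≤ k → 1 ≤ ℓ → ℓ < k → 0 < p_xx k ℓ - p_xy k ℓ) := by
  refine ⟨fun ℓ hℓ ↦ by rw [(h3 ℓ hℓ).1, (h3 ℓ hℓ).2, sub_self],
    fun k hk ↦ by rw [(h0 k hk).2, sub_self], fun k ℓ hk hℓ₀ hℓ ↦ ?_⟩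
  obtain ⟨m, rfl⟩ : ∃ m, k = m + 2 := ⟨k - 2, by omega⟩
  have hm : 2 ≤ m := by omega
  exact sub_pos.2 <| p_xy_lt_p_xx_of_le hxx hxy hm hℓ₀ hℓ
    (p_xy_le_p_xx h3 h0 hxx hxy hm _ (by omega))
    (mul_p_xy_lt_one (fun ℓ hℓ ↦ (h3 ℓ hℓ).1) (fun k hk ↦ (h0 k hk).1) hxy hm _ (by omega))
end

section
/- With p_xy defined recursively by p_xy(3,ℓ) = 1/3 for ℓ = 0,1,2, p_xy(k,0) = 1/C(k+1,2) + (C(k-1,2)/C(k+1,2))*p_xy(k-1,0) for k ≥ 4, and p_xy(k,ℓ) = (C(k-1,2)/C(k,2))*p_xy(k-1,ℓ-1) for k ≥ 4, k > ℓ ≥ 1: whenever k ≥ 4 and 1 ≤ ℓ < k with k - ℓ ∈ {1, 2, 3}, one has p_xy(k, ℓ) = 2/(k*(k-1)). -/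
lemma C2_ne_zero {n : ℕ} (hn : 2 ≤ n) : C2 n ≠ 0 := by
  have : (2 : ℚ) ≤ n := by exact_mod_cast hn
  unfold C2
  exact div_ne_zero (mul_ne_zero (by linarith) (by linarith)) two_ne_zero

lemma one_div_C2 (n : ℕ) : 1 / C2 n = 2 / ((n : ℚ) * ((n : ℚ) - 1)) := by
  rw [C2, one_div_div]

lemma C2_mul_eq_C2_three_mul_of_rec (p : ℕ → ℕ → ℚ)
    (hrec : ∀ k ℓ, 4 ≤ k → 1 ≤ ℓ → ℓ < k → p k ℓ = C2 (k-1) / C2 k * p (k-1) (ℓ-1)) :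
    ∀ j ℓ, j ≤ ℓ → ℓ < 3 + j → C2 (3 + j) * p (3 + j) ℓ = C2 3 * p 3 (ℓ - j) := by
  intro j
  induction j with
  | zero => simp
  | succ j ih =>
    intro ℓ hjℓ hℓ
    have hstep : C2 (3 + (j + 1)) * p (3 + (j + 1)) ℓ = C2 (3 + j) * p (3 + j) (ℓ - 1) := by
      rw [hrec _ ℓ (by omega) (by omega) hℓ, ← mul_assoc, mul_div_cancel₀ _ (C2_ne_zero (by omega))]
      rfl
    rw [hstep, ih (ℓ - 1) (by omega) (by omega), Nat.sub_sub, Nat.add_comm 1 j]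

theorem stmt10_general (p_xy : ℕ → ℕ → ℚ)
    (h3 : ∀ ℓ, ℓ ≤ 2 → p_xy 3 ℓ = 1/3)
    (hxy : ∀ k ℓ, 4 ≤ k → 1 ≤ ℓ → ℓ < k →
      p_xy k ℓ = (C2 (k-1) / C2 k) * p_xy (k-1) (ℓ-1)) :
    ∀ k ℓ, 4 ≤ k → 1 ≤ ℓ → ℓ < k → (k - ℓ = 1 ∨ k - ℓ = 2 ∨ k - ℓ = 3) →
      p_xy k ℓ = 2 / ((k : ℚ) * ((k : ℚ) - 1)) := by
  intro k ℓ hk _ hℓk hdiff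
  obtain ⟨j, rfl⟩ : ∃ j, k = 3 + j := ⟨k - 3, by omega⟩
  have hdiag := C2_mul_eq_C2_three_mul_of_rec p_xy hxy j ℓ (by omega) hℓk
  rw [h3 (ℓ - j) (by omega), show C2 3 = 3 by norm_num [C2]] at hdiag
  rw [← one_div_C2, eq_div_iff (C2_ne_zero (by omega)), mul_comm, hdiag]
  norm_num

theorem stmt10 (p_xy : ℕ → ℕ → ℚ)
    (h3 : ∀ ℓ, ℓ ≤ 2 → p_xy 3 ℓ = 1/3)
    (h0 : ∀ k, 4 ≤ k →
      p_xy k 0 = 1 / C2 (k+1) + (C2 (k-1) / C2 (k+1)) * p_xy (k-1) 0)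
    (hxy : ∀ k ℓ, 4 ≤ k → 1 ≤ ℓ → ℓ < k →
      p_xy k ℓ = (C2 (k-1) / C2 k) * p_xy (k-1) (ℓ-1)) :
    ∀ k ℓ, 4 ≤ k → 1 ≤ ℓ → ℓ < k → (k - ℓ = 1 ∨ k - ℓ = 2 ∨ k - ℓ = 3) →
      p_xy k ℓ = 2 / ((k : ℚ) * ((k : ℚ) - 1)) :=
  stmt10_general p_xy h3 hxy
end

section
/- Define rational-valued functions r_xx, r_xy, r_xyy on pairs (k,ℓ) with k ≥ 2, 0 ≤ ℓ < k by: r_xx(3,0) = 1/5, r_xx(3,ℓ) = 1/3 for ℓ = 1,2; r_xx(k,0) = 1/C(k+2,2) + (C(k,2)/C(k+2,2))*r_xx(k-1,0) for k ≥ 4 (using r_xy(k,0) = r_xx(k,0)); r_xx(k,ℓ) = 1/C(k,2) + (C(k-2,2)/C(k,2))*r_xx(k-1,ℓ-1) for k ≥ 4, k > ℓ ≥ 1; r_xy(2,0) = 1/3, r_xy(2,1) = 0, r_xy(k,0) = r_xx(k,0) for k ≥ 3, r_xy(k,ℓ) = (C(k-1,2)/C(k,2))*r_xy(k-1,ℓ-1)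 for k ≥ 3, k > ℓ ≥ 1; r_xyy(2,0) = r_xyy(2,1) = 1, r_xyy(k,ℓ) = (C(k-1,2)/C(k,2))*r_xyy(k-1,ℓ-1) for k ≥ 3, k > ℓ ≥ 1, with r_xyy(k,0) = r_xx(k,0) for k ≥ 3. Then r_xy(k,0) ≤ 1/(k+2) for all k ≥ 3. -/
lemma C2_add_two (k : ℕ) : C2 (k + 2) = ((k : ℚ) + 2) * ((k : ℚ) + 1) / 2 := by
  unfold C2; push_cast; ring

lemma C2_recursion_step_le {k : ℕ} (hk : 1 ≤ k) {a : ℚ} (ha : a ≤ 1 / ((k : ℚ) + 1)) :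
    1 / C2 (k + 2) + C2 k / C2 (k + 2) * a ≤ 1 / ((k : ℚ) + 2) := by
  have hk' : (1 : ℚ) ≤ k := by exact_mod_cast hk
  have hcoef : 0 ≤ C2 k / C2 (k + 2) := div_nonneg (C2_nonneg k) (C2_nonneg (k + 2))
  calc 1 / C2 (k + 2) + C2 k / C2 (k + 2) * a
      ≤ 1 / C2 (k + 2) + C2 k / C2 (k + 2) * (1 / ((k : ℚ) + 1)) := by gcongr
    _ = ((k : ℚ) ^ 2 + k + 2) / (((k : ℚ) + 2) * ((k : ℚ) + 1) ^ 2) := by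
      rw [C2_add_two]; unfold C2; field_simp; ring
    -- after clearing denominators: k² + k + 2 ≤ (k + 1)², i.e. 1 ≤ k
    _ ≤ 1 / ((k : ℚ) + 2) := by
      rw [div_le_div_iff₀ (by positivity) (by positivity)]
      nlinarith

theorem le_one_div_add_two_of_C2_recursion (a : ℕ → ℚ) (h3 : a 3 ≤ 1 / 5)
    (hrec : ∀ k, 4 ≤ k → a k = 1 / C2 (k + 2) + (C2 k / C2 (k + 2)) * a (k - 1)) :
    ∀ k, 3 ≤ k → a k ≤ 1 / ((k : ℚ) + 2) := by
  intro k hk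
  induction k, hk using Nat.le_induction with
  | base => norm_num [h3]
  | succ n hn ih =>
    rw [hrec (n + 1) (by omega), Nat.add_sub_cancel]
    refine C2_recursion_step_le (by omega) ?_
    push_cast
    rwa [add_assoc, one_add_one_eq_two]

theorem stmt15_general (r_xx r_xy : ℕ → ℕ → ℚ)
    (hxx30 : r_xx 3 0 = 1/5)
    (hxx0 : ∀ k, 4 ≤ k →
      r_xx k 0 = 1 / C2 (k+2) + (C2 k / C2 (k+2)) * r_xx (k-1) 0)
    (hxy0 : ∀ k, 3 ≤ k → r_xy k 0 = r_xx k 0) :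
    ∀ k, 3 ≤ k → r_xy k 0 ≤ 1 / ((k : ℚ) + 2) := by
  intro k hk
  rw [hxy0 k hk]
  exact le_one_div_add_two_of_C2_recursion (r_xx · 0) hxx30.le hxx0 k hk

theorem stmt15 (r_xx r_xy r_xyy : ℕ → ℕ → ℚ)
    (hxx30 : r_xx 3 0 = 1/5) (hxx31 : r_xx 3 1 = 1/3) (hxx32 : r_xx 3 2 = 1/3)
    (hxx0 : ∀ k, 4 ≤ k →
      r_xx k 0 = 1 / C2 (k+2) + (C2 k / C2 (k+2)) * r_xx (k-1) 0)
    (hxxrec : ∀ k ℓ, 4 ≤ k → 1 ≤ ℓ → ℓ < k →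
      r_xx k ℓ = 1 / C2 k + (C2 (k-2) / C2 k) * r_xx (k-1) (ℓ-1))
    (hxy20 : r_xy 2 0 = 1/3) (hxy21 : r_xy 2 1 = 0)
    (hxy0 : ∀ k, 3 ≤ k → r_xy k 0 = r_xx k 0)
    (hxyrec : ∀ k ℓ, 3 ≤ k → 1 ≤ ℓ → ℓ < k →
      r_xy k ℓ = (C2 (k-1) / C2 k) * r_xy (k-1) (ℓ-1))
    (hxyy20 : r_xyy 2 0 = 1) (hxyy21 : r_xyy 2 1 = 1)
    (hxyy0 : ∀ k, 3 ≤ k → r_xyy k 0 = r_xx k 0)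
    (hxyyrec : ∀ k ℓ, 3 ≤ k → 1 ≤ ℓ → ℓ < k →
      r_xyy k ℓ = (C2 (k-1) / C2 k) * r_xyy (k-1) (ℓ-1)) :
    ∀ k, 3 ≤ k → r_xy k 0 ≤ 1 / ((k : ℚ) + 2) :=
  stmt15_general r_xx r_xy hxx30 hxx0 hxy0
end
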